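/- arXiv:2402.12269 — 4 statements merged into one kernel-verified Lean document; each statement's English description precedes it below -/
import Mathlib

section
/- The PMFGW discrepancy is invariant under graph isomorphism: if ŷ' is obtained from ŷ by a node permutation P and g' is obtained from g by a node permutation Q (so that their paddings satisfy P(g') = permuted P(g)), then PMFGW(ŷ, P(g)) = PMFGW(ŷ', P(g')). -/
/-- Doubly stochastic M×M matrices. -/
def DS (M : ℕ) : Set (Matrix (Fin M) (Fin M) ℝ) :=
  {T | (∀ i j, 0 ≤ T i j) ∧ (∀ i, ∑ j, T i j = 1) ∧ (∀ j, ∑ i, T i j = 1)}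

/-- The PMFGW objective for a transport plan `T`, prediction `(hh, FF, AA)` and
(padded) target `(h, F, A)`. -/
def pmfgwObj {M d : ℕ} (ℓh : ℝ → ℝ → ℝ) (ℓF : (Fin d → ℝ) → (Fin d → ℝ) → ℝ)
    (ℓA : ℝ → ℝ → ℝ)
    (hh : Fin M → ℝ) (FF : Fin M → Fin d → ℝ) (AA : Matrix (Fin M) (Fin M) ℝ)
    (h : Fin M → ℝ) (F : Fin M → Fin d → ℝ) (A : Matrix (Fin M) (Fin M) ℝ)
    (T : Matrix (Fin M) (Fin M) ℝ) : ℝ :=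
  (∑ i, ∑ j, T i j * ℓh (hh i) (h j))
  + (∑ i, ∑ j, T i j * ℓF (FF i) (F j) * h j)
  + (∑ i, ∑ j, ∑ k, ∑ l, T i j * T k l * ℓA (AA i k) (A j l) * h j * h l)

/-- PMFGW: minimum of the objective over doubly stochastic matrices. -/
noncomputable def PMFGW {M d : ℕ} (ℓh : ℝ → ℝ → ℝ) (ℓF : (Fin d → ℝ) → (Fin d → ℝ) → ℝ)
    (ℓA : ℝ → ℝ → ℝ)
    (hh : Fin M → ℝ) (FF : Fin M → Fin d → ℝ) (AA : Matrix (Fin M) (Fin M) ℝ)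
    (h : Fin M → ℝ) (F : Fin M → Fin d → ℝ) (A : Matrix (Fin M) (Fin M) ℝ) : ℝ :=
  sInf ((pmfgwObj ℓh ℓF ℓA hh FF AA h F A) '' DS M)

/- Relabelling a transport plan by the two permutations turns the objective of the permuted graphs
into the objective of the original ones, and this relabelling maps the doubly stochastic matrices
bijectively onto themselves, so both infima range over the same set of values. -/

lemma submatrix_mem_DS {M : ℕ} {T : Matrix (Fin M) (Fin M) ℝ} (hT : T ∈ DS M)
    (σ τ : Equiv.Perm (Fin M)) : T.submatrix σ τ ∈ DS M := by
  obtain ⟨hnonneg, hrow, hcol⟩ := hT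
  refine ⟨fun i j => hnonneg _ _, fun i => ?_, fun j => ?_⟩
  · exact (Equiv.sum_comp τ (T (σ i))).trans (hrow _)
  · exact (Equiv.sum_comp σ fun i => T i (τ j)).trans (hcol _)

lemma image_reindex_DS {M : ℕ} (σ τ : Equiv.Perm (Fin M)) :
    Matrix.reindex σ τ '' DS M = DS M := by
  rw [Equiv.image_eq_preimage_symm]
  ext T
  refine ⟨fun hT => ?_, fun hT => submatrix_mem_DS hT σ τ⟩
  simpa using submatrix_mem_DS hT σ.symm τ.symm

lemma pmfgwObj_perm {M d : ℕ} (ℓh : ℝ → ℝ → ℝ) (ℓF : (Fin d → ℝ) → (Fin d → ℝ) → ℝ)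
    (ℓA : ℝ → ℝ → ℝ)
    (hh : Fin M → ℝ) (FF : Fin M → Fin d → ℝ) (AA : Matrix (Fin M) (Fin M) ℝ)
    (h : Fin M → ℝ) (F : Fin M → Fin d → ℝ) (A : Matrix (Fin M) (Fin M) ℝ)
    (σ τ : Equiv.Perm (Fin M)) (T : Matrix (Fin M) (Fin M) ℝ) :
    pmfgwObj ℓh ℓF ℓA (fun i => hh (σ i)) (fun i => FF (σ i)) (fun i k => AA (σ i) (σ k))
      (fun j => h (τ j)) (fun j => F (τ j)) (fun j l => A (τ j) (τ l)) T
    = pmfgwObj ℓh ℓF ℓA hh FF AA h F A (Matrix.reindex σ τ T) := by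
  simp only [pmfgwObj]
  congr 1; congr 1
  · exact Fintype.sum_equiv σ _ _ fun i => Fintype.sum_equiv τ _ _ fun j => by simp
  · exact Fintype.sum_equiv σ _ _ fun i => Fintype.sum_equiv τ _ _ fun j => by simp
  · exact Fintype.sum_equiv σ _ _ fun i => Fintype.sum_equiv τ _ _ fun j =>
      Fintype.sum_equiv σ _ _ fun k => Fintype.sum_equiv τ _ _ fun l => by simp

/-- PMFGW is invariant under graph isomorphism: permuting the nodes of the prediction by `σ`
and the nodes of the (padded) target by `τ` leaves the value unchanged. -/
theorem pmfgw_invariant {M d : ℕ} (ℓh : ℝ → ℝ → ℝ) (ℓF : (Fin d → ℝ) → (Fin d → ℝ) → ℝ)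
    (ℓA : ℝ → ℝ → ℝ)
    (hh : Fin M → ℝ) (FF : Fin M → Fin d → ℝ) (AA : Matrix (Fin M) (Fin M) ℝ)
    (h : Fin M → ℝ) (F : Fin M → Fin d → ℝ) (A : Matrix (Fin M) (Fin M) ℝ)
    (σ τ : Equiv.Perm (Fin M)) :
    PMFGW ℓh ℓF ℓA (fun i => hh (σ i)) (fun i => FF (σ i)) (fun i k => AA (σ i) (σ k))
      (fun j => h (τ j)) (fun j => F (τ j)) (fun j l => A (τ j) (τ l))
    = PMFGW ℓh ℓF ℓA hh FF AA h F A := by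
  have hobj := funext (pmfgwObj_perm ℓh ℓF ℓA hh FF AA h F A σ τ)
  unfold PMFGW
  rw [hobj, ← Function.comp_def, Set.image_comp, image_reindex_DS]
end

section
/- PMFGW is nonnegative, and PMFGW(ŷ, P(g)) = 0 if and only if ŷ is isomorphic (via a node permutation) to the padded graph P(g). -/
open Finset Matrix

def IsPositiveGroundLoss {α : Type*} (ℓ : α → α → ℝ) : Prop :=
  ∀ x y, 0 ≤ ℓ x y ∧ (ℓ x y = 0 ↔ x = y)

theorem Fintype.sum_sum_eq_zero_iff_of_nonneg {ι κ α : Type*} [Fintype ι] [Fintype κ]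
    [AddCommMonoid α] [PartialOrder α] [IsOrderedAddMonoid α] {f : ι → κ → α}
    (hf : ∀ i j, 0 ≤ f i j) :
    ∑ i, ∑ j, f i j = 0 ↔ ∀ i j, f i j = 0 := by
  rw [Finset.sum_eq_zero_iff_of_nonneg fun i _ => Finset.sum_nonneg fun j _ => hf i j]
  simp only [mem_univ, forall_const, Finset.sum_eq_zero_iff_of_nonneg fun j _ => hf _ j]

theorem Equiv.Perm.apply_eq_of_permMatrix_ne_zero {R n : Type*} [DecidableEq n] [Zero R] [One R]
    {σ : Equiv.Perm n} {i j : n} (h : σ.permMatrix R i j ≠ 0) : σ i = j := by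
  by_contra hne
  simp [PEquiv.toMatrix_apply, Equiv.toPEquiv_apply, hne] at h

section DoublyStochastic

variable {R n : Type*} [Fintype n] [DecidableEq n]

theorem exists_perm_forall_pos_of_mem_doublyStochastic [Field R] [LinearOrder R]
    [IsStrictOrderedRing R] {T : Matrix n n R} (hT : T ∈ doublyStochastic R n) :
    ∃ σ : Equiv.Perm n, ∀ j, 0 < T (σ j) j := by
  obtain ⟨w, hw0, hw1, hwT⟩ := exists_eq_sum_perm_of_mem_doublyStochastic hT
  obtain ⟨τ, -, hτ⟩ := exists_lt_of_sum_lt (s := univ) (f := 0) (g := w) (by simp [hw1])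
  refine ⟨τ.symm, fun j => ?_⟩
  have hterm : ∀ σ : Equiv.Perm n, 0 ≤ (w σ • σ.permMatrix R) (τ.symm j) j := fun σ =>
    mul_nonneg (hw0 σ) (by simp only [PEquiv.toMatrix_apply]; split_ifs <;> simp)
  calc 0 < w τ := hτ
    _ = (w τ • τ.permMatrix R) (τ.symm j) j := by
      simp [PEquiv.toMatrix_apply, Equiv.toPEquiv_apply]
    _ ≤ T (τ.symm j) j := by
      rw [← hwT, Matrix.sum_apply]
      exact single_le_sum (fun σ _ => hterm σ) (mem_univ τ)

theorem isCompact_doublyStochastic : IsCompact (doublyStochastic ℝ n : Set (Matrix n n ℝ)) := by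
  rw [doublyStochastic_eq_convexHull_permMatrix]
  exact (Set.finite_range fun σ : Equiv.Perm n => σ.permMatrix ℝ).isCompact_convexHull (𝕜 := ℝ)

end DoublyStochastic

theorem DS_eq_doublyStochastic (M : ℕ) : DS M = doublyStochastic ℝ (Fin M) := by
  ext T
  rw [SetLike.mem_coe, mem_doublyStochastic_iff_sum]
  rfl

section Objective

variable {M d : ℕ} {ℓh : ℝ → ℝ → ℝ} {ℓF : (Fin d → ℝ) → (Fin d → ℝ) → ℝ} {ℓA : ℝ → ℝ → ℝ}
  {hh : Fin M → ℝ} {FF : Fin M → Fin d → ℝ} {AA : Matrix (Fin M) (Fin M) ℝ}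
  {h : Fin M → ℝ} {F : Fin M → Fin d → ℝ} {A : Matrix (Fin M) (Fin M) ℝ}
  {T : Matrix (Fin M) (Fin M) ℝ}

theorem continuous_pmfgwObj : Continuous (pmfgwObj ℓh ℓF ℓA hh FF AA h F A) := by
  unfold pmfgwObj
  fun_prop

theorem isLeast_PMFGW :
    IsLeast (pmfgwObj ℓh ℓF ℓA hh FF AA h F A '' doublyStochastic ℝ (Fin M))
      (PMFGW ℓh ℓF ℓA hh FF AA h F A) := by
  rw [PMFGW, DS_eq_doublyStochastic]
  exact (isCompact_doublyStochastic.image continuous_pmfgwObj).isLeast_sInf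
    ⟨_, _, one_mem _, rfl⟩

theorem pmfgwObj_nonneg (hT : ∀ i j, 0 ≤ T i j) (h_nonneg : ∀ j, 0 ≤ h j)
    (hℓh : ∀ x y, 0 ≤ ℓh x y) (hℓF : ∀ x y, 0 ≤ ℓF x y) (hℓA : ∀ x y, 0 ≤ ℓA x y) :
    0 ≤ pmfgwObj ℓh ℓF ℓA hh FF AA h F A T := by
  unfold pmfgwObj
  refine add_nonneg (add_nonneg ?_ ?_) ?_ <;>
    refine sum_nonneg fun i _ => sum_nonneg fun j _ => ?_
  · exact mul_nonneg (hT i j) (hℓh _ _)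
  · exact mul_nonneg (mul_nonneg (hT i j) (hℓF _ _)) (h_nonneg j)
  · exact sum_nonneg fun k _ => sum_nonneg fun l _ => by
      have := mul_nonneg (mul_nonneg (hT i j) (hT k l)) (hℓA (AA i k) (A j l))
      exact mul_nonneg (mul_nonneg this (h_nonneg j)) (h_nonneg l)

theorem pmfgwObj_eq_zero_iff (hT : ∀ i j, 0 ≤ T i j) (h_nonneg : ∀ j, 0 ≤ h j)
    (hℓh : IsPositiveGroundLoss ℓh) (hℓF : IsPositiveGroundLoss ℓF)
    (hℓA : IsPositiveGroundLoss ℓA) :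
    pmfgwObj ℓh ℓF ℓA hh FF AA h F A T = 0 ↔
      (∀ i j, T i j ≠ 0 → hh i = h j) ∧
      (∀ i j, T i j ≠ 0 → h j ≠ 0 → FF i = F j) ∧
      (∀ i j k l, T i j ≠ 0 → T k l ≠ 0 → h j ≠ 0 → h l ≠ 0 → AA i k = A j l) := by
  have hterm₁ : ∀ i j, 0 ≤ T i j * ℓh (hh i) (h j) := fun i j =>
    mul_nonneg (hT i j) (hℓh _ _).1
  have hterm₂ : ∀ i j, 0 ≤ T i j * ℓF (FF i) (F j) * h j := fun i j =>
    mul_nonneg (mul_nonneg (hT i j) (hℓF _ _).1) (h_nonneg j)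
  have hterm₃ : ∀ i j k l, 0 ≤ T i j * T k l * ℓA (AA i k) (A j l) * h j * h l :=
    fun i j k l => mul_nonneg (mul_nonneg (mul_nonneg (mul_nonneg (hT i j) (hT k l))
      (hℓA _ _).1) (h_nonneg j)) (h_nonneg l)
  have hinner₃ : ∀ i j, 0 ≤ ∑ k, ∑ l, T i j * T k l * ℓA (AA i k) (A j l) * h j * h l :=
    fun i j => sum_nonneg fun k _ => sum_nonneg fun l _ => hterm₃ i j k l
  have hsum_nonneg : ∀ {f : Fin M → Fin M → ℝ}, (∀ i j, 0 ≤ f i j) → 0 ≤ ∑ i, ∑ j, f i j :=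
    fun hf => sum_nonneg fun i _ => sum_nonneg fun j _ => hf i j
  have hS₁ := hsum_nonneg hterm₁
  have hS₂ := hsum_nonneg hterm₂
  have hS₃ := hsum_nonneg hinner₃
  unfold pmfgwObj
  rw [add_eq_zero_iff_of_nonneg (add_nonneg hS₁ hS₂) hS₃, add_eq_zero_iff_of_nonneg hS₁ hS₂,
    Fintype.sum_sum_eq_zero_iff_of_nonneg hterm₁, Fintype.sum_sum_eq_zero_iff_of_nonneg hterm₂,
    Fintype.sum_sum_eq_zero_iff_of_nonneg hinner₃]
  simp only [Fintype.sum_sum_eq_zero_iff_of_nonneg (hterm₃ _ _), mul_eq_zero, (hℓh _ _).2,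
    (hℓF _ _).2, (hℓA _ _).2, and_assoc]
  exact and_congr (forall₂_congr fun _ _ => by tauto) <| and_congr
    (forall₂_congr fun _ _ => by tauto) (forall₄_congr fun _ _ _ _ => by tauto)

theorem PMFGW_nonneg (h_nonneg : ∀ j, 0 ≤ h j) (hℓh : ∀ x y, 0 ≤ ℓh x y)
    (hℓF : ∀ x y, 0 ≤ ℓF x y) (hℓA : ∀ x y, 0 ≤ ℓA x y) :
    0 ≤ PMFGW ℓh ℓF ℓA hh FF AA h F A := by
  obtain ⟨T, hT, hT_eq⟩ := isLeast_PMFGW.1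
  exact hT_eq ▸
    pmfgwObj_nonneg (fun _ _ => nonneg_of_mem_doublyStochastic hT) h_nonneg hℓh hℓF hℓA

theorem PMFGW_eq_zero_iff (h_nonneg : ∀ j, 0 ≤ h j) (hℓh : ∀ x y, 0 ≤ ℓh x y)
    (hℓF : ∀ x y, 0 ≤ ℓF x y) (hℓA : ∀ x y, 0 ≤ ℓA x y) :
    PMFGW ℓh ℓF ℓA hh FF AA h F A = 0 ↔
      ∃ T ∈ doublyStochastic ℝ (Fin M), pmfgwObj ℓh ℓF ℓA hh FF AA h F A T = 0 := by
  have hleast : IsLeast (pmfgwObj ℓh ℓF ℓA hh FF AA h F A '' doublyStochastic ℝ (Fin M))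
      (PMFGW ℓh ℓF ℓA hh FF AA h F A) := isLeast_PMFGW
  constructor
  · intro hzero
    obtain ⟨T, hT, hT_eq⟩ := hleast.1
    exact ⟨T, hT, hT_eq.trans hzero⟩
  · rintro ⟨T, hT, hT_zero⟩
    exact le_antisymm (hT_zero ▸ hleast.2 ⟨T, hT, rfl⟩) (PMFGW_nonneg h_nonneg hℓh hℓF hℓA)

end Objective

theorem pmfgw_nonneg_and_eq_zero_iff_isomorphic_general {M d m : ℕ}
    (ℓh : ℝ → ℝ → ℝ) (ℓF : (Fin d → ℝ) → (Fin d → ℝ) → ℝ) (ℓA : ℝ → ℝ → ℝ)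
    (hℓh : ∀ x y, 0 ≤ ℓh x y ∧ (ℓh x y = 0 ↔ x = y))
    (hℓF : ∀ x y, 0 ≤ ℓF x y ∧ (ℓF x y = 0 ↔ x = y))
    (hℓA : ∀ x y, 0 ≤ ℓA x y ∧ (ℓA x y = 0 ↔ x = y))
    -- the prediction: a continuous graph
    (hh : Fin M → ℝ) (FF : Fin M → Fin d → ℝ) (AA : Matrix (Fin M) (Fin M) ℝ)
    -- the padded target: mask is m ones followed by M−m zeros, features and adjacency zero-padded
    (h : Fin M → ℝ) (F : Fin M → Fin d → ℝ) (A : Matrix (Fin M) (Fin M) ℝ)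
    (hpad : ∀ j, h j = if (j : ℕ) < m then 1 else 0) :
    0 ≤ PMFGW ℓh ℓF ℓA hh FF AA h F A ∧
    (PMFGW ℓh ℓF ℓA hh FF AA h F A = 0 ↔
      ∃ σ : Equiv.Perm (Fin M),
        (∀ j, hh (σ j) = h j) ∧
        (∀ j, h j = 1 → FF (σ j) = F j) ∧
        (∀ j l, h j = 1 → h l = 1 → AA (σ j) (σ l) = A j l)) := by
  have hmask : ∀ j, h j = 0 ∨ h j = 1 := fun j => by rw [hpad j]; split_ifs <;> simp
  have h_nonneg : ∀ j, 0 ≤ h j := fun j => by rcases hmask j with hj | hj <;> simp [hj]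
  have h_ne_zero : ∀ j, h j ≠ 0 ↔ h j = 1 := fun j => by
    rcases hmask j with hj | hj <;> simp [hj]
  have hℓh₀ : ∀ x y, 0 ≤ ℓh x y := fun x y => (hℓh x y).1
  have hℓF₀ : ∀ x y, 0 ≤ ℓF x y := fun x y => (hℓF x y).1
  have hℓA₀ : ∀ x y, 0 ≤ ℓA x y := fun x y => (hℓA x y).1
  refine ⟨PMFGW_nonneg h_nonneg hℓh₀ hℓF₀ hℓA₀,
    (PMFGW_eq_zero_iff h_nonneg hℓh₀ hℓF₀ hℓA₀).trans ⟨?_, ?_⟩⟩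
  · rintro ⟨T, hT, hT_zero⟩
    obtain ⟨hmatch_h, hmatch_F, hmatch_A⟩ :=
      (pmfgwObj_eq_zero_iff (fun _ _ => nonneg_of_mem_doublyStochastic hT) h_nonneg
        hℓh hℓF hℓA).1 hT_zero
    obtain ⟨σ, hσ⟩ := exists_perm_forall_pos_of_mem_doublyStochastic hT
    exact ⟨σ, fun j => hmatch_h _ _ (hσ j).ne',
      fun j hj => hmatch_F _ _ (hσ j).ne' ((h_ne_zero j).2 hj),
      fun j l hj hl => hmatch_A _ _ _ _ (hσ j).ne' (hσ l).ne' ((h_ne_zero j).2 hj)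
        ((h_ne_zero l).2 hl)⟩
  · rintro ⟨σ, hσh, hσF, hσA⟩
    have hT : Equiv.Perm.permMatrix ℝ σ⁻¹ ∈ doublyStochastic ℝ (Fin M) :=
      permMatrix_mem_doublyStochastic
    have hsupp {i j} (hij : Equiv.Perm.permMatrix ℝ σ⁻¹ i j ≠ 0) : i = σ j :=
      Equiv.Perm.inv_eq_iff_eq.1 (Equiv.Perm.apply_eq_of_permMatrix_ne_zero hij)
    refine ⟨_, hT, (pmfgwObj_eq_zero_iff (fun _ _ => nonneg_of_mem_doublyStochastic hT)
      h_nonneg hℓh hℓF hℓA).2 ⟨?_, ?_, ?_⟩⟩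
    · exact fun i j hij => hsupp hij ▸ hσh j
    · exact fun i j hij hj => hsupp hij ▸ hσF j ((h_ne_zero j).1 hj)
    · exact fun i j k l hij hkl hj hl => hsupp hij ▸ hsupp hkl ▸
        hσA j l ((h_ne_zero j).1 hj) ((h_ne_zero l).1 hl)

/-- PMFGW with positive ground losses is nonnegative, and it vanishes iff the (continuous)
prediction is isomorphic, via a node permutation, to the padded target. -/
theorem pmfgw_nonneg_and_eq_zero_iff_isomorphic {M d m : ℕ} (hm : m ≤ M)
    (ℓh : ℝ → ℝ → ℝ) (ℓF : (Fin d → ℝ) → (Fin d → ℝ) → ℝ) (ℓA : ℝ → ℝ → ℝ)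
    (hℓh : ∀ x y, 0 ≤ ℓh x y ∧ (ℓh x y = 0 ↔ x = y))
    (hℓF : ∀ x y, 0 ≤ ℓF x y ∧ (ℓF x y = 0 ↔ x = y))
    (hℓA : ∀ x y, 0 ≤ ℓA x y ∧ (ℓA x y = 0 ↔ x = y))
    -- the prediction: a continuous graph
    (hh : Fin M → ℝ) (FF : Fin M → Fin d → ℝ) (AA : Matrix (Fin M) (Fin M) ℝ)
    (hhh : ∀ i, hh i ∈ Set.Icc (0:ℝ) 1) (hAA : ∀ i k, AA i k ∈ Set.Icc (0:ℝ) 1)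
    -- the padded target: mask is m ones followed by M−m zeros, features and adjacency zero-padded
    (h : Fin M → ℝ) (F : Fin M → Fin d → ℝ) (A : Matrix (Fin M) (Fin M) ℝ)
    (hpad : ∀ j, h j = if (j : ℕ) < m then 1 else 0)
    (hFpad : ∀ j : Fin M, ¬ ((j : ℕ) < m) → F j = 0)
    (hApad : ∀ j l : Fin M, (¬ ((j : ℕ) < m) ∨ ¬ ((l : ℕ) < m)) → A j l = 0) :
    0 ≤ PMFGW ℓh ℓF ℓA hh FF AA h F A ∧
    (PMFGW ℓh ℓF ℓA hh FF AA h F A = 0 ↔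
      ∃ σ : Equiv.Perm (Fin M),
        (∀ j, hh (σ j) = h j) ∧
        (∀ j, h j = 1 → FF (σ j) = F j) ∧
        (∀ j l, h j = 1 → h l = 1 → AA (σ j) (σ l) = A j l)) :=
  pmfgw_nonneg_and_eq_zero_iff_isomorphic_general ℓh ℓF ℓA hℓh hℓF hℓA hh FF AA h F A hpad
end

section
/- The padded Fused Gromov-Wasserstein value equals the partial Fused Gromov-Wasserstein value: min over doubly stochastic M×M matrices T of Σ_{i=1}^M Σ_{j=1}^m T_{ij} c_{ij} + Σ_{i,k=1}^M Σ_{j,l=1}^m T_{ij} T_{kl} d_{ik,jl} equals min over partial plans T_p ∈ π_{M,m} of the same objective, and the first m columns of any optimal doubly stochastic plan form an optimal partial plan. -/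
/-- Partial transport plans `π_{M,m}`. -/
def partialPlans (M m : ℕ) : Set (Matrix (Fin M) (Fin m) ℝ) :=
  {T | (∀ i j, T i j ∈ Set.Icc (0 : ℝ) 1) ∧ (∀ i, ∑ j, T i j ≤ 1) ∧
       (∀ j, ∑ i, T i j = 1) ∧ (∑ i, ∑ j, T i j = (m : ℝ))}

/-- The (fused) objective on an `M×m` plan, with linear cost `c` and quadratic cost `d`. -/
def fgwObj {M m : ℕ} (c : Matrix (Fin M) (Fin m) ℝ)
    (d : Fin M → Fin M → Fin m → Fin m → ℝ) (T : Matrix (Fin M) (Fin m) ℝ) : ℝ :=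
  (∑ i, ∑ j, T i j * c i j) + (∑ i, ∑ k, ∑ j, ∑ l, T i j * T k l * d i k j l)

/-- The first `m` columns of a square `M×M` matrix. -/
def restrict {M m : ℕ} (hm : m ≤ M) (T : Matrix (Fin M) (Fin M) ℝ) :
    Matrix (Fin M) (Fin m) ℝ :=
  Matrix.of fun i j => T i (Fin.castLE hm j)

/-!
Restricting a doubly stochastic `M × M` plan to its first `m` columns maps `DS M` onto
`partialPlans M m`, so both infima are taken over the same set of values. Surjectivity: a partial
plan `P` with row sums `r i ≤ 1` is completed by spreading each row's deficit `1 - r i` evenly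
over the `M - m` new columns; since the columns of `P` sum to `1`, the total deficit is
`M - m`, so every new column sums to `1` as well.
-/

lemma restrict_mem_partialPlans {M m : ℕ} (hm : m ≤ M) {T : Matrix (Fin M) (Fin M) ℝ}
    (hT : T ∈ DS M) : restrict hm T ∈ partialPlans M m := by
  obtain ⟨n, rfl⟩ := Nat.exists_eq_add_of_le hm
  obtain ⟨hnonneg, hrow, hcol⟩ := hT
  have hrow_le : ∀ i, ∑ j, restrict hm T i j ≤ 1 := fun i => by
    rw [← hrow i, Fin.sum_univ_add]
    exact le_add_of_nonneg_right (Finset.sum_nonneg fun j _ => hnonneg i _)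
  refine ⟨fun i j => ⟨hnonneg i _, ?_⟩, hrow_le, fun j => hcol _, ?_⟩
  · exact (Finset.single_le_sum (fun j _ => hnonneg i (Fin.castAdd n j))
      (Finset.mem_univ j)).trans (hrow_le i)
  · simp only [restrict, Matrix.of_apply]
    rw [Finset.sum_comm]
    simp [hcol]

noncomputable def padColumns {ι : Type*} [Fintype ι] {m : ℕ} (P : Matrix ι (Fin m) ℝ)
    (n : ℕ) : Matrix ι (Fin (m + n)) ℝ :=
  Matrix.of fun i => Fin.append (P i) fun _ => (1 - ∑ j, P i j) / n

section padColumns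

variable {ι : Type*} [Fintype ι] {m n : ℕ} {P : Matrix ι (Fin m) ℝ}

@[simp]
lemma padColumns_castAdd (i : ι) (j : Fin m) : padColumns P n i (Fin.castAdd n j) = P i j := by
  simp [padColumns]

@[simp]
lemma padColumns_natAdd (i : ι) (j : Fin n) :
    padColumns P n i (Fin.natAdd m j) = (1 - ∑ j, P i j) / n := by
  simp [padColumns]

lemma sum_padColumns_row (i : ι) (hzero : n = 0 → ∑ j, P i j = 1) :
    ∑ j, padColumns P n i j = 1 := by
  rw [Fin.sum_univ_add]
  simp only [padColumns_castAdd, padColumns_natAdd, Finset.sum_const, Finset.card_univ,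
    Fintype.card_fin, nsmul_eq_mul]
  rcases eq_or_ne n 0 with rfl | hn
  · simp [hzero rfl]
  · rw [mul_div_cancel₀ _ (Nat.cast_ne_zero.mpr hn)]
    ring

lemma sum_one_sub_rowSum (hcard : Fintype.card ι = m + n) (hcol : ∀ j, ∑ i, P i j = 1) :
    ∑ i, (1 - ∑ j, P i j) = n := by
  rw [Finset.sum_sub_distrib, Finset.sum_comm (f := P)]
  simp [hcol, hcard]

lemma sum_padColumns_natAdd (hcard : Fintype.card ι = m + n) (hcol : ∀ j, ∑ i, P i j = 1)
    (j : Fin n) : ∑ i, padColumns P n i (Fin.natAdd m j) = 1 := by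
  have hn : (n : ℝ) ≠ 0 := Nat.cast_ne_zero.mpr (Fin.pos j).ne'
  simp [← Finset.sum_div, sum_one_sub_rowSum hcard hcol, hn]

end padColumns

lemma padColumns_mem_DS {m n : ℕ} {P : Matrix (Fin (m + n)) (Fin m) ℝ}
    (hP : P ∈ partialPlans (m + n) m) : padColumns P n ∈ DS (m + n) := by
  obtain ⟨hIcc, hrow, hcol, -⟩ := hP
  have hcard : Fintype.card (Fin (m + n)) = m + n := Fintype.card_fin _
  have hdeficit : ∀ i, 0 ≤ 1 - ∑ j, P i j := fun i => sub_nonneg.mpr (hrow i)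
  have hfull : n = 0 → ∀ i, ∑ j, P i j = 1 := by
    rintro rfl i
    have htotal := (sum_one_sub_rowSum hcard hcol).trans Nat.cast_zero
    linarith [(Finset.sum_eq_zero_iff_of_nonneg fun i _ => hdeficit i).mp htotal i
      (Finset.mem_univ i)]
  refine ⟨fun i => Fin.addCases (fun j => by simpa using (hIcc i j).1)
      (by simp [div_nonneg, hdeficit]),
    fun i => sum_padColumns_row i (hfull · i),
    Fin.addCases (by simpa using hcol) (sum_padColumns_natAdd hcard hcol)⟩

lemma restrict_padColumns {m n : ℕ} (hm : m ≤ m + n) (P : Matrix (Fin (m + n)) (Fin m) ℝ) :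
    restrict hm (padColumns P n) = P := by
  ext i j
  exact padColumns_castAdd i j

lemma restrict_image_DS {M m : ℕ} (hm : m ≤ M) : restrict hm '' DS M = partialPlans M m := by
  refine subset_antisymm (Set.image_subset_iff.mpr fun T => restrict_mem_partialPlans hm) ?_
  obtain ⟨n, rfl⟩ := Nat.exists_eq_add_of_le hm
  exact fun P hP => ⟨padColumns P n, padColumns_mem_DS hP, restrict_padColumns hm P⟩

theorem padded_eq_partial_fgw_general {M m : ℕ} (hm : m ≤ M)
    (c : Matrix (Fin M) (Fin m) ℝ) (d : Fin M → Fin M → Fin m → Fin m → ℝ) :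
    sInf ((fun T => fgwObj c d (restrict hm T)) '' DS M)
      = sInf (fgwObj c d '' partialPlans M m) ∧
    ∀ T ∈ DS M, fgwObj c d (restrict hm T) = sInf ((fun T => fgwObj c d (restrict hm T)) '' DS M) →
      restrict hm T ∈ partialPlans M m ∧
      fgwObj c d (restrict hm T) = sInf (fgwObj c d '' partialPlans M m) := by
  have himage :
      (fun T => fgwObj c d (restrict hm T)) '' DS M = fgwObj c d '' partialPlans M m := by
    rw [← restrict_image_DS hm, Set.image_image]
  refine ⟨by rw [himage], fun T hT hopt => ⟨restrict_mem_partialPlans hm hT, ?_⟩⟩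
  rw [hopt, himage]

/-- The padded Fused Gromov-Wasserstein value (minimum over doubly stochastic plans of the
objective, which only involves the first `m` columns) equals the partial Fused
Gromov-Wasserstein value (minimum over partial plans), and the first `m` columns of any
optimal doubly stochastic plan form an optimal partial plan. -/
theorem padded_eq_partial_fgw {M m : ℕ} (hm : m ≤ M)
    (c : Matrix (Fin M) (Fin m) ℝ) (d : Fin M → Fin M → Fin m → Fin m → ℝ)
    (hd : ∀ i k j l, 0 ≤ d i k j l) :
    sInf ((fun T => fgwObj c d (restrict hm T)) '' DS M)
      = sInf (fgwObj c d '' partialPlans M m) ∧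
    ∀ T ∈ DS M, fgwObj c d (restrict hm T) = sInf ((fun T => fgwObj c d (restrict hm T)) '' DS M) →
      restrict hm T ∈ partialPlans M m ∧
      fgwObj c d (restrict hm T) = sInf (fgwObj c d '' partialPlans M m) :=
  padded_eq_partial_fgw_general hm c d
end

section
/- If the node-existence ground loss ℓ_h is constant, then PMFGW equals the partial Fused Gromov-Wasserstein discrepancy plus a constant independent of the transport plan and of the prediction's structure and features. -/
/-!
With `ℓh ≡ c₀` the node-existence term of the PMFGW cost of a doubly stochastic `T` is `c₀` times
the total mass `M` of `T`, and the padding mask `h` kills every column of `T` beyond the `m` real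
target nodes, so the cost of `T` is the partial FGW cost of its first `m` columns plus `M * c₀`.
Restriction to the first `m` columns maps doubly stochastic matrices onto partial plans: a partial
plan extends back by spreading the deficit `1 - ∑ₖ Tp i k` of each row evenly over the `M - m`
padding columns (the deficits add up to `M - m`). The partial FGW cost is continuous on the compact
set of partial plans, hence bounded below, so the two infima differ exactly by `M * c₀`.
-/

open Finset

theorem sInf_image_eq_sInf_image_add {α β : Type*} {f : α → ℝ} {g : β → ℝ} {r : α → β}
    {S : Set α} {P : Set β} (c : ℝ) (hmaps : Set.MapsTo r S P) (hsurj : Set.SurjOn r S P)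
    (hfg : ∀ x ∈ S, f x = g (r x) + c) (hne : P.Nonempty) (hbdd : BddBelow (g '' P)) :
    sInf (f '' S) = sInf (g '' P) + c := by
  have himage : f '' S = (OrderIso.addRight c) '' (g '' P) := by
    rw [Set.image_congr hfg, ← hsurj.image_eq_of_mapsTo hmaps, Set.image_image, Set.image_image]
    rfl
  rw [himage, ← OrderIso.map_csInf' _ (hne.image g) hbdd]
  rfl

theorem sum_mul_mask_eq_sum_comp {ι κ R : Type*} [Fintype ι] [Fintype κ] [NonAssocSemiring R]
    {e : κ → ι} (he : Function.Injective e) {h : ι → R}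
    (h_on : ∀ k, h (e k) = 1) (h_off : ∀ j ∉ Set.range e, h j = 0) (φ : ι → R) :
    ∑ j, φ j * h j = ∑ k, φ (e k) :=
  (Fintype.sum_of_injective e he _ _ (fun j hj => by simp [h_off j hj])
    (fun k => by simp [h_on k])).symm

section Cost

variable {ι κ X : Type*} [Fintype ι] [Fintype κ]

def fgwCost (ℓF : X → X → ℝ) (ℓA : ℝ → ℝ → ℝ) (FF : ι → X) (AA : Matrix ι ι ℝ)
    (F : κ → X) (A : Matrix κ κ ℝ) (T : Matrix ι κ ℝ) : ℝ :=
  (∑ i, ∑ j, T i j * ℓF (FF i) (F j))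
    + ∑ i, ∑ j, ∑ k, ∑ l, T i j * T k l * ℓA (AA i k) (A j l)

def pmfgwCost (ℓh : ℝ → ℝ → ℝ) (ℓF : X → X → ℝ) (ℓA : ℝ → ℝ → ℝ) (hh : ι → ℝ) (FF : ι → X)
    (AA : Matrix ι ι ℝ) (h : ι → ℝ) (F : ι → X) (A : Matrix ι ι ℝ) (T : Matrix ι ι ℝ) : ℝ :=
  (∑ i, ∑ j, T i j * ℓh (hh i) (h j))
    + (∑ i, ∑ j, T i j * ℓF (FF i) (F j) * h j)
    + ∑ i, ∑ j, ∑ k, ∑ l, T i j * T k l * ℓA (AA i k) (A j l) * h j * h l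

theorem pmfgwCost_eq_fgwCost_add {ℓh : ℝ → ℝ → ℝ} {c₀ : ℝ} (hconst : ∀ x y, ℓh x y = c₀)
    (ℓF : X → X → ℝ) (ℓA : ℝ → ℝ → ℝ) (hh : ι → ℝ) (FF : ι → X) (AA : Matrix ι ι ℝ)
    {e : κ → ι} (he : Function.Injective e) {h : ι → ℝ}
    (h_on : ∀ k, h (e k) = 1) (h_off : ∀ j ∉ Set.range e, h j = 0)
    (F : ι → X) (A : Matrix ι ι ℝ) {T : Matrix ι ι ℝ} (hrow : ∀ i, ∑ j, T i j = 1) :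
    pmfgwCost ℓh ℓF ℓA hh FF AA h F A T
      = fgwCost ℓF ℓA FF AA (F ∘ e) (A.submatrix e e) (T.submatrix id e)
        + Fintype.card ι * c₀ := by
  have hmask := sum_mul_mask_eq_sum_comp he h_on h_off
  simp only [pmfgwCost, fgwCost, hconst, ← sum_mul, hrow, hmask, sum_const, card_univ,
    nsmul_one, Matrix.submatrix_apply, id, Function.comp_apply]
  ring

theorem continuous_fgwCost (ℓF : X → X → ℝ) (ℓA : ℝ → ℝ → ℝ) (FF : ι → X) (AA : Matrix ι ι ℝ)
    (F : κ → X) (A : Matrix κ κ ℝ) : Continuous (fgwCost ℓF ℓA FF AA F A) := by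
  unfold fgwCost
  fun_prop

end Cost

theorem isClosed_partialPlans (M m : ℕ) : IsClosed (partialPlans M m) := by
  simp only [partialPlans, Set.ofPred_and, Set.ofPred_forall]
  refine .inter (isClosed_iInter fun i => isClosed_iInter fun j => isClosed_Icc.preimage
    (by fun_prop)) (.inter (isClosed_iInter fun i => isClosed_le (by fun_prop) (by fun_prop))
    (.inter (isClosed_iInter fun j => isClosed_eq (by fun_prop) (by fun_prop))
      (isClosed_eq (by fun_prop) (by fun_prop))))

theorem isCompact_partialPlans (M m : ℕ) : IsCompact (partialPlans M m) :=
  (isCompact_univ_pi fun _ => isCompact_univ_pi fun _ => isCompact_Icc).of_isClosed_subset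
    (isClosed_partialPlans M m) fun _ hT i _ j _ => hT.1 i j

theorem one_mem_DS (M : ℕ) : (1 : Matrix (Fin M) (Fin M) ℝ) ∈ DS M :=
  ⟨Matrix.zero_le_one_elem, fun i => by simp [Matrix.one_apply],
    fun j => by simp [Matrix.one_apply]⟩

section Padding

variable {M m : ℕ}

theorem sum_castLE_eq_sum_ite {R : Type*} [AddCommMonoid R] (hm : m ≤ M) (φ : Fin M → R) :
    ∑ k : Fin m, φ (Fin.castLE hm k) = ∑ j : Fin M, if (j : ℕ) < m then φ j else 0 :=
  Fintype.sum_of_injective _ (Fin.castLE_injective hm) _ _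
    (fun j hj => if_neg (by simpa [Fin.range_castLE] using hj)) (fun k => (if_pos k.isLt).symm)

theorem sum_ite_lt_zero_else_const {R : Type*} [Ring R] (hm : m ≤ M) (c : R) :
    ∑ j : Fin M, (if (j : ℕ) < m then 0 else c) = (M - m) * c := by
  have hfirst := sum_castLE_eq_sum_ite hm fun _ => c
  simp only [sum_const, card_univ, Fintype.card_fin, nsmul_eq_mul] at hfirst
  calc ∑ j : Fin M, (if (j : ℕ) < m then 0 else c)
      = ∑ j : Fin M, (c - if (j : ℕ) < m then c else 0) :=
        sum_congr rfl fun j _ => by split_ifs <;> simp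
    _ = (M - m) * c := by simp [sum_sub_distrib, ← hfirst, sub_mul]

theorem submatrix_castLE_mem_partialPlans (hm : m ≤ M) {T : Matrix (Fin M) (Fin M) ℝ}
    (hT : T ∈ DS M) :
    T.submatrix id (Fin.castLE hm) ∈ partialPlans M m := by
  obtain ⟨hnn, hrow, hcol⟩ := hT
  have hrow_le : ∀ i, ∑ k : Fin m, T i (Fin.castLE hm k) ≤ 1 := fun i => by
    rw [sum_castLE_eq_sum_ite, ← hrow i]
    exact sum_le_sum fun j _ => by split_ifs <;> simp [hnn i j]
  refine ⟨fun i k => ⟨hnn _ _, ?_⟩, hrow_le, fun k => hcol _, ?_⟩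
  · exact (single_le_sum (fun j _ => hnn i j) (mem_univ _)).trans (hrow i).le
  · simp only [Matrix.submatrix_apply, id]
    rw [sum_comm]
    simp [hcol]

noncomputable def extendPlan (Tp : Matrix (Fin M) (Fin m) ℝ) : Matrix (Fin M) (Fin M) ℝ :=
  fun i j => if hj : (j : ℕ) < m then Tp i ⟨j, hj⟩ else (1 - ∑ k, Tp i k) / (M - m)

theorem submatrix_extendPlan (hm : m ≤ M) (Tp : Matrix (Fin M) (Fin m) ℝ) :
    (extendPlan Tp).submatrix id (Fin.castLE hm) = Tp := by
  ext i k
  simp [extendPlan]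

theorem extendPlan_mem_DS (hm : m ≤ M) {Tp : Matrix (Fin M) (Fin m) ℝ}
    (hTp : Tp ∈ partialPlans M m) :
    extendPlan Tp ∈ DS M := by
  obtain ⟨h01, hrow, hcol, htot⟩ := hTp
  have hdeficit_sum : ∑ i, (1 - ∑ k, Tp i k) = M - m := by simp [sum_sub_distrib, htot]
  have hdeficit_nonneg : ∀ i, 0 ≤ 1 - ∑ k, Tp i k := fun i => sub_nonneg.2 (hrow i)
  have hdeficit_le : ∀ i, 1 - ∑ k, Tp i k ≤ M - m := fun i =>
    hdeficit_sum ▸ single_le_sum (fun i _ => hdeficit_nonneg i) (mem_univ i)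
  refine ⟨fun i j => ?_, fun i => ?_, fun j => ?_⟩
  · unfold extendPlan
    split_ifs
    exacts [(h01 i _).1,
      div_nonneg (hdeficit_nonneg i) ((hdeficit_nonneg i).trans (hdeficit_le i))]
  · have hsplit : ∀ j, extendPlan Tp i j = (if (j : ℕ) < m then extendPlan Tp i j else 0)
        + (if (j : ℕ) < m then 0 else (1 - ∑ k, Tp i k) / (M - m)) := fun j => by
      unfold extendPlan
      split_ifs <;> simp
    rw [sum_congr rfl fun j _ => hsplit j, sum_add_distrib, ← sum_castLE_eq_sum_ite hm,
      sum_ite_lt_zero_else_const hm, mul_div_cancel_of_imp' fun h0 =>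
        le_antisymm (h0 ▸ hdeficit_le i) (hdeficit_nonneg i)]
    simp [extendPlan]
  · by_cases hj : (j : ℕ) < m
    · simpa [extendPlan, hj] using hcol ⟨j, hj⟩
    · have hMm : (M : ℝ) - m ≠ 0 := sub_ne_zero.2 (by exact_mod_cast (by omega : M ≠ m))
      simp only [extendPlan, hj, dif_neg, not_false_eq_true]
      rw [← sum_div, hdeficit_sum, div_self hMm]

end Padding

/-- If the node-existence ground loss `ℓ_h` is constant equal to `c₀`, then PMFGW equals the
partial Fused Gromov-Wasserstein discrepancy plus the constant `M * c₀`, which is independent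
of the transport plan and of the prediction's structure and features. -/
theorem pmfgw_eq_partial_fgw_add_const {M d m : ℕ} (hm : m ≤ M)
    (ℓh : ℝ → ℝ → ℝ) (ℓF : (Fin d → ℝ) → (Fin d → ℝ) → ℝ) (ℓA : ℝ → ℝ → ℝ)
    (c₀ : ℝ) (hconst : ∀ x y, ℓh x y = c₀)
    -- prediction
    (hh : Fin M → ℝ) (FF : Fin M → Fin d → ℝ) (AA : Matrix (Fin M) (Fin M) ℝ)
    -- padded target, with mask indicator of the first m nodes
    (h : Fin M → ℝ) (F : Fin M → Fin d → ℝ) (A : Matrix (Fin M) (Fin M) ℝ)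
    (hpad : ∀ j, h j = if (j : ℕ) < m then 1 else 0) :
    sInf ((fun T : Matrix (Fin M) (Fin M) ℝ =>
        (∑ i, ∑ j, T i j * ℓh (hh i) (h j))
        + (∑ i, ∑ j, T i j * ℓF (FF i) (F j) * h j)
        + (∑ i, ∑ j, ∑ k, ∑ l, T i j * T k l * ℓA (AA i k) (A j l) * h j * h l)) '' DS M)
      = sInf ((fun Tp : Matrix (Fin M) (Fin m) ℝ =>
        (∑ i, ∑ j, Tp i j * ℓF (FF i) (F (Fin.castLE hm j)))
        + (∑ i, ∑ j, ∑ k, ∑ l, Tp i j * Tp k l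
            * ℓA (AA i k) (A (Fin.castLE hm j) (Fin.castLE hm l)))) '' partialPlans M m)
        + (M : ℝ) * c₀ := by
  have h_on : ∀ k : Fin m, h (Fin.castLE hm k) = 1 := fun k => by simp [hpad, k.isLt]
  have h_off : ∀ j ∉ Set.range (Fin.castLE hm), h j = 0 := fun j hj => by
    simpa [hpad, Fin.range_castLE] using hj
  have hcost : ∀ T ∈ DS M, pmfgwCost ℓh ℓF ℓA hh FF AA h F A T
      = fgwCost ℓF ℓA FF AA (F ∘ Fin.castLE hm) (A.submatrix (Fin.castLE hm) (Fin.castLE hm))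
          (T.submatrix id (Fin.castLE hm)) + M * c₀ := fun T hT => by
    rw [pmfgwCost_eq_fgwCost_add hconst ℓF ℓA hh FF AA (Fin.castLE_injective hm) h_on h_off F A
      hT.2.1, Fintype.card_fin]
  exact sInf_image_eq_sInf_image_add _ (fun T hT => submatrix_castLE_mem_partialPlans hm hT)
    (fun Tp hTp => ⟨extendPlan Tp, extendPlan_mem_DS hm hTp, submatrix_extendPlan hm Tp⟩) hcost
    ⟨_, submatrix_castLE_mem_partialPlans hm (one_mem_DS M)⟩
    ((isCompact_partialPlans M m).bddBelow_image (continuous_fgwCost ..).continuousOn)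
end
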